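/- Let N be a compact smooth manifold of dimension n, let j : N → ℂ^n be a totally real smooth embedding, and let ζ be a smooth nowhere-vanishing vector field on N. Then there exists ε₀ > 0 such that for every ε with 0 < ε < ε₀, the ℂ-normal pushoff j^♯_ζ : N → ℂ^n, a ↦ j(a) + ε·i·dj_a(ζ(a)), is a smooth embedding whose image is disjoint from j(N). -/

import Mathlib

open scoped Manifold
open Metric Module

noncomputable section

/-- `ℂⁿ`, identified with `EuclideanSpace ℂ (Fin n)`. -/
abbrev Cn (n : ℕ) : Type := EuclideanSpace ℂ (Fin n)

instance (n : ℕ) (x : Cn n) : SMul ℂ (TangentSpace 𝓘(ℝ, Cn n) x) :=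
  inferInstanceAs (SMul ℂ (Cn n))

section

variable (n : ℕ) {N : Type*} [TopologicalSpace N]
  [ChartedSpace (EuclideanSpace ℝ (Fin n)) N]

/-- A smooth embedding of an `n`-manifold `N` in `ℂⁿ`: smooth, injective, a topological
embedding, with injective differential at every point. -/
def IsSmoothEmbeddingOf (j : N → Cn n) : Prop :=
  ContMDiff (𝓡 n) 𝓘(ℝ, Cn n) (⊤ : ℕ∞) j ∧
  Function.Injective j ∧
  Topology.IsEmbedding j ∧
  ∀ a : N, Function.Injective (mfderiv (𝓡 n) 𝓘(ℝ, Cn n) j a)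

/-- The embedding `j` is totally real: at every point, the image of the tangent space
under `dj` contains no complex line, i.e. `dj(TₐN) ∩ i·dj(TₐN) = {0}`. -/
def IsTotallyRealOf (j : N → Cn n) : Prop :=
  ∀ a : N,
    Set.range (mfderiv (𝓡 n) 𝓘(ℝ, Cn n) j a) ∩
      ((fun v : Cn n => Complex.I • v) '' Set.range (mfderiv (𝓡 n) 𝓘(ℝ, Cn n) j a)) = {0}

/-- The `ℂ`-normal pushoff `a ↦ j(a) + ε·i·djₐ(ζ(a))` of `j` by the vector field `ζ`. -/
def cPushoff (j : N → Cn n) (ζ : ∀ a : N, TangentSpace (𝓡 n) a) (ε : ℝ) (a : N) : Cn n :=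
  let dv : Cn n := mfderiv (𝓡 n) 𝓘(ℝ, Cn n) j a (ζ a)
  j a + ε • Complex.I • dv

end

/-! Consider `Φ (t, a) = j a + t • i • dj_a (ζ a)` on `ℝ × N`, so that the pushoffs are the slices
`t = ε` and `j` is the slice `t = 0`. At `(0, a)` the differential
`(s, v) ↦ s • i • dj_a (ζ a) + dj_a v` is injective, because `dj_a` is injective and, by total
reality, `i • dj_a (ζ a) ∉ dj_a (T_a N)`. So `Φ` is injective near every point of `{0} × N`; being
injective on that compact slice, it is injective on `(-ε₀, ε₀) × N`. Within the slice `t = ε` this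
is injectivity of the pushoff, across the slices `t = ε` and `t = 0` it is disjointness from
`j(N)`. Injectivity of the differential is an open condition, so by compactness it also survives
for small `ε`, and a continuous injection of a compact space is an embedding. -/

open Set Filter Topology Function

theorem exists_mem_nhds_injOn_prod_univ {T X Y : Type*} [TopologicalSpace T] [TopologicalSpace X]
    [CompactSpace X] [TopologicalSpace Y] [T2Space Y] {Φ : T × X → Y} {t₀ : T}
    (hΦ : Continuous Φ) (h₀ : Injective fun x => Φ (t₀, x))
    (hloc : ∀ x, ∃ u ∈ 𝓝 (t₀, x), InjOn Φ u) : ∃ U ∈ 𝓝 t₀, InjOn Φ (U ×ˢ univ) := by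
  have hK : IsCompact ({t₀} ×ˢ univ : Set (T × X)) := isCompact_singleton.prod isCompact_univ
  obtain ⟨s, hs, hinj⟩ := Set.InjOn.exists_mem_nhdsSet
    (by rintro ⟨_, x⟩ ⟨rfl, -⟩ ⟨_, y⟩ ⟨rfl, -⟩ h; rw [h₀ h]) hK
    (fun _ _ => hΦ.continuousAt) (by rintro ⟨_, x⟩ ⟨rfl, -⟩; exact hloc x)
  rw [isCompact_singleton.nhdsSet_prod_eq isCompact_univ, nhdsSet_singleton, nhdsSet_univ,
    mem_prod_top] at hs
  exact ⟨_, hs, hinj.mono fun z ⟨hz, _⟩ => hz z.2⟩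

section Euclidean

variable {𝕜 E F : Type*} [NontriviallyNormedField 𝕜] [NormedAddCommGroup E] [NormedSpace 𝕜 E]
  [NormedAddCommGroup F] [NormedSpace 𝕜 F]

theorem ContinuousLinearMap.injective_toSpanSingleton_coprod {D : E →L[𝕜] F} (hD : Injective D)
    {w : F} (hw : w ∉ range D) : Injective ((toSpanSingleton 𝕜 w).coprod D) := by
  refine (injective_iff_map_eq_zero _).2 fun ⟨s, v⟩ h => ?_
  simp only [coprod_apply, toSpanSingleton_apply] at h
  obtain rfl : s = 0 := by
    by_contra hs
    exact hw ⟨-s⁻¹ • v, by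
      rw [map_smul, eq_neg_of_add_eq_zero_right h, smul_neg, neg_smul, neg_neg, inv_smul_smul₀ hs]⟩
  simp only [zero_smul, zero_add] at h
  simp [hD (h.trans D.map_zero.symm)]

variable {f g : E → F} {x₀ : E}

theorem HasStrictFDerivAt.add_fst_smul {f' g' : E →L[𝕜] F} (hf : HasStrictFDerivAt f f' x₀)
    (hg : HasStrictFDerivAt g g' x₀) :
    HasStrictFDerivAt (fun z : 𝕜 × E => f z.2 + z.1 • g z.2)
      ((ContinuousLinearMap.toSpanSingleton 𝕜 (g x₀)).coprod f') (0, x₀) := by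
  have hsnd : HasStrictFDerivAt (Prod.snd : 𝕜 × E → E) (.snd 𝕜 𝕜 E) (0, x₀) :=
    hasStrictFDerivAt_snd
  have := (hf.comp (0, x₀) hsnd).add (hasStrictFDerivAt_fst.smul (hg.comp (0, x₀) hsnd))
  refine this.congr_fderiv (ContinuousLinearMap.ext fun ⟨s, v⟩ => ?_)
  simp [add_comm]

variable [CompleteSpace 𝕜] [FiniteDimensional 𝕜 E]

theorem HasStrictFDerivAt.exists_mem_nhds_injOn {f : E → F} {f' : E →L[𝕜] F} {x : E}
    (hf : HasStrictFDerivAt f f' x) (hf' : Injective f') : ∃ u ∈ 𝓝 x, InjOn f u := by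
  suffices ∀ᶠ p in 𝓝 x ×ˢ 𝓝 x, f p.1 = f p.2 → p.1 = p.2 from eventually_prod_self_iff.1 this
  obtain ⟨K, hK, hanti⟩ := (f' : E →ₗ[𝕜] F).injective_iff_antilipschitz.mp hf'
  have hK' : (0 : ℝ) < K := hK
  have hc : (0 : ℝ) < (2 * (K : ℝ))⁻¹ := by positivity
  filter_upwards [nhds_prod_eq (x := x) (y := x) ▸ hf.isLittleO.def hc] with p hp heq
  rw [heq, sub_self, zero_sub, norm_neg] at hp
  have hanti' : ‖p.1 - p.2‖ ≤ K * ‖f' (p.1 - p.2)‖ := by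
    simpa using hanti.le_mul_dist (p.1 - p.2) 0
  have hhalf : ‖p.1 - p.2‖ ≤ ‖p.1 - p.2‖ / 2 := by
    calc ‖p.1 - p.2‖ ≤ K * ‖f' (p.1 - p.2)‖ := hanti'
      _ ≤ K * ((2 * (K : ℝ))⁻¹ * ‖p.1 - p.2‖) := by gcongr
      _ = ‖p.1 - p.2‖ / 2 := by field_simp
  exact sub_eq_zero.1 (norm_le_zero_iff.1 (by linarith))

theorem HasStrictFDerivAt.exists_mem_nhds_injOn_add_smul {f' g' : E →L[𝕜] F}
    (hf : HasStrictFDerivAt f f' x₀) (hg : HasStrictFDerivAt g g' x₀) (hinj : Injective f')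
    (hnr : g x₀ ∉ range f') :
    ∃ u ∈ 𝓝 ((0 : 𝕜), x₀), InjOn (fun z : 𝕜 × E => f z.2 + z.1 • g z.2) u :=
  (hf.add_fst_smul hg).exists_mem_nhds_injOn
    (ContinuousLinearMap.injective_toSpanSingleton_coprod hinj hnr)

theorem eventually_injective_fderiv_add_smul (hf : ContDiffAt 𝕜 1 f x₀)
    (hg : ContDiffAt 𝕜 1 g x₀) (hinj : Injective (fderiv 𝕜 f x₀)) :
    ∀ᶠ z : 𝕜 × E in 𝓝 (0, x₀), Injective (fderiv 𝕜 (fun x => f x + z.1 • g x) z.2) := by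
  have hcont : ContinuousAt (fun z : 𝕜 × E => fderiv 𝕜 f z.2 + z.1 • fderiv 𝕜 g z.2) (0, x₀) :=
    ((hf.continuousAt_fderiv one_ne_zero).comp continuousAt_snd).add
      (continuousAt_fst.smul ((hg.continuousAt_fderiv one_ne_zero).comp continuousAt_snd))
  have hopen := hcont.eventually
    (ContinuousLinearMap.isOpen_injective.mem_nhds (by simpa using hinj))
  have hdiff : ∀ᶠ x in 𝓝 x₀, DifferentiableAt 𝕜 f x ∧ DifferentiableAt 𝕜 g x :=
    (hf.eventually (by simp)).and (hg.eventually (by simp)) |>.mono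
      fun _ h => ⟨h.1.differentiableAt one_ne_zero, h.2.differentiableAt one_ne_zero⟩
  filter_upwards [hopen, continuousAt_snd.eventually hdiff] with z hz ⟨hfz, hgz⟩
  rwa [fderiv_fun_add hfz (hgz.fun_const_smul z.1), fderiv_fun_const_smul hgz]

end Euclidean

section Chart

variable {𝕜 E F M : Type*} [NontriviallyNormedField 𝕜] [NormedAddCommGroup E]
  [NormedSpace 𝕜 E] [NormedAddCommGroup F] [NormedSpace 𝕜 F] [TopologicalSpace M]
  [ChartedSpace E M] {φ : M → F} {a p : M}

theorem ContMDiff.contDiffAt_comp_extChartAt_symm {n : WithTop ℕ∞} [IsManifold 𝓘(𝕜, E) n M]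
    (hφ : ContMDiff 𝓘(𝕜, E) 𝓘(𝕜, F) n φ) (hp : p ∈ (chartAt E a).source) :
    ContDiffAt 𝕜 n (φ ∘ (extChartAt 𝓘(𝕜, E) a).symm) (extChartAt 𝓘(𝕜, E) a p) :=
  (contMDiffOn_iff_contDiffOn.mp (hφ.comp_contMDiffOn (contMDiffOn_extChartAt_symm a))).contDiffAt
    ((isOpen_extChartAt_target a).mem_nhds ((extChartAt 𝓘(𝕜, E) a).map_source (by simpa using hp)))

variable [IsManifold 𝓘(𝕜, E) 1 M]

theorem mfderiv_eq_fderiv_comp_mfderiv_chartAt (hp : p ∈ (chartAt E a).source)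
    (hφ : DifferentiableAt 𝕜 (φ ∘ (extChartAt 𝓘(𝕜, E) a).symm) (extChartAt 𝓘(𝕜, E) a p)) :
    mfderiv 𝓘(𝕜, E) 𝓘(𝕜, F) φ p =
      (fderiv 𝕜 (φ ∘ (extChartAt 𝓘(𝕜, E) a).symm) (extChartAt 𝓘(𝕜, E) a p)).comp
        (mfderiv 𝓘(𝕜, E) 𝓘(𝕜, E) (chartAt E a) p) := by
  have hchart : HasMFDerivAt 𝓘(𝕜, E) 𝓘(𝕜, E) (extChartAt 𝓘(𝕜, E) a) p
      (mfderiv 𝓘(𝕜, E) 𝓘(𝕜, E) (chartAt E a) p) :=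
    hasMFDerivAt_extChartAt hp
  have heq : φ =ᶠ[𝓝 p] (φ ∘ (extChartAt 𝓘(𝕜, E) a).symm) ∘ extChartAt 𝓘(𝕜, E) a := by
    filter_upwards [extChartAt_source_mem_nhds' (I := 𝓘(𝕜, E)) (by simpa using hp)] with q hq
    simp only [comp_apply, (extChartAt 𝓘(𝕜, E) a).left_inv hq]
  rw [heq.mfderiv_eq, mfderiv_comp p hφ.mdifferentiableAt hchart.mdifferentiableAt,
    hchart.mfderiv, mfderiv_eq_fderiv]
  rfl

theorem injective_mfderiv_iff_injective_fderiv (hp : p ∈ (chartAt E a).source)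
    (hφ : DifferentiableAt 𝕜 (φ ∘ (extChartAt 𝓘(𝕜, E) a).symm) (extChartAt 𝓘(𝕜, E) a p)) :
    Injective (mfderiv 𝓘(𝕜, E) 𝓘(𝕜, F) φ p) ↔
      Injective (fderiv 𝕜 (φ ∘ (extChartAt 𝓘(𝕜, E) a).symm) (extChartAt 𝓘(𝕜, E) a p)) := by
  rw [mfderiv_eq_fderiv_comp_mfderiv_chartAt hp hφ]
  exact Injective.of_comp_iff' _ ((mdifferentiable_chart a).mfderiv_bijective hp)

theorem range_mfderiv_eq_range_fderiv (hp : p ∈ (chartAt E a).source)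
    (hφ : DifferentiableAt 𝕜 (φ ∘ (extChartAt 𝓘(𝕜, E) a).symm) (extChartAt 𝓘(𝕜, E) a p)) :
    range (mfderiv 𝓘(𝕜, E) 𝓘(𝕜, F) φ p) =
      range (fderiv 𝕜 (φ ∘ (extChartAt 𝓘(𝕜, E) a).symm) (extChartAt 𝓘(𝕜, E) a p)) := by
  rw [mfderiv_eq_fderiv_comp_mfderiv_chartAt hp hφ]
  exact ((mdifferentiable_chart a).mfderiv_bijective hp).surjective.range_comp _

end Chart

section Pushoff

variable {𝕜 E F M : Type*} [RCLike 𝕜] [NormedAddCommGroup E] [NormedSpace 𝕜 E]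
  [FiniteDimensional 𝕜 E] [NormedAddCommGroup F] [NormedSpace 𝕜 F] [TopologicalSpace M]
  [ChartedSpace E M] [IsManifold 𝓘(𝕜, E) 1 M] {j w : M → F} {a : M}

theorem exists_mem_nhds_injOn_add_smul (hj : ContMDiff 𝓘(𝕜, E) 𝓘(𝕜, F) 1 j)
    (hw : ContMDiff 𝓘(𝕜, E) 𝓘(𝕜, F) 1 w) (hinj : Injective (mfderiv 𝓘(𝕜, E) 𝓘(𝕜, F) j a))
    (hnr : w a ∉ range (mfderiv 𝓘(𝕜, E) 𝓘(𝕜, F) j a)) :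
    ∃ u ∈ 𝓝 ((0 : 𝕜), a), InjOn (fun z : 𝕜 × M => j z.2 + z.1 • w z.2) u := by
  set φ := extChartAt 𝓘(𝕜, E) a
  have ha : a ∈ (chartAt E a).source := mem_chart_source E a
  have hf := hj.contDiffAt_comp_extChartAt_symm ha
  have hg := hw.contDiffAt_comp_extChartAt_symm ha
  have hfd := hf.differentiableAt one_ne_zero
  rw [injective_mfderiv_iff_injective_fderiv ha hfd] at hinj
  rw [range_mfderiv_eq_range_fderiv ha hfd] at hnr
  obtain ⟨u, hu, hinjOn⟩ := (hf.hasStrictFDerivAt one_ne_zero).exists_mem_nhds_injOn_add_smul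
    (hg.hasStrictFDerivAt one_ne_zero) hinj (by rwa [comp_apply, extChartAt_to_inv])
  have hψ : ContinuousAt (Prod.map id φ) ((0 : 𝕜), a) :=
    continuousAt_id.prodMap (continuousAt_extChartAt a)
  have hψinj : InjOn (Prod.map id φ) (univ ×ˢ φ.source : Set (𝕜 × M)) :=
    (injOn_id univ).prodMap φ.injOn
  refine ⟨Prod.map id φ ⁻¹' u ∩ univ ×ˢ φ.source,
    inter_mem (hψ.preimage_mem_nhds hu) (prod_mem_nhds univ_mem (extChartAt_source_mem_nhds a)),
    fun z hz z' hz' h => hψinj hz.2 hz'.2 (hinjOn hz.1 hz'.1 ?_)⟩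
  have hcoord : ∀ z ∈ (univ ×ˢ φ.source : Set (𝕜 × M)),
      (j ∘ φ.symm) (φ z.2) + z.1 • (w ∘ φ.symm) (φ z.2) = j z.2 + z.1 • w z.2 :=
    fun z hz => by simp only [comp_apply, φ.left_inv hz.2]
  exact (hcoord z hz.2).trans (h.trans (hcoord z' hz'.2).symm)

theorem eventually_injective_mfderiv_add_smul (hj : ContMDiff 𝓘(𝕜, E) 𝓘(𝕜, F) 1 j)
    (hw : ContMDiff 𝓘(𝕜, E) 𝓘(𝕜, F) 1 w) (hinj : Injective (mfderiv 𝓘(𝕜, E) 𝓘(𝕜, F) j a)) :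
    ∀ᶠ z : 𝕜 × M in 𝓝 (0, a),
      Injective (mfderiv 𝓘(𝕜, E) 𝓘(𝕜, F) (fun p => j p + z.1 • w p) z.2) := by
  set φ := extChartAt 𝓘(𝕜, E) a
  have ha : a ∈ (chartAt E a).source := mem_chart_source E a
  have hf := hj.contDiffAt_comp_extChartAt_symm ha
  rw [injective_mfderiv_iff_injective_fderiv ha (hf.differentiableAt one_ne_zero)] at hinj
  have hψ : ContinuousAt (Prod.map id φ) ((0 : 𝕜), a) :=
    continuousAt_id.prodMap (continuousAt_extChartAt a)
  filter_upwards [hψ.eventually (eventually_injective_fderiv_add_smul hf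
    (hw.contDiffAt_comp_extChartAt_symm ha) hinj),
    continuousAt_snd.eventually (chart_source_mem_nhds E a)] with z hz hzs
  have hsmooth : ContMDiff 𝓘(𝕜, E) 𝓘(𝕜, F) 1 fun p => j p + z.1 • w p :=
    hj.add (ContMDiff.smul (I := 𝓘(𝕜, 𝕜)) contMDiff_const hw)
  rwa [injective_mfderiv_iff_injective_fderiv hzs
    ((hsmooth.contDiffAt_comp_extChartAt_symm hzs).differentiableAt one_ne_zero)]

theorem exists_mem_nhds_injOn_add_smul_prod_univ [CompactSpace M]
    (hj : ContMDiff 𝓘(𝕜, E) 𝓘(𝕜, F) 1 j) (hw : ContMDiff 𝓘(𝕜, E) 𝓘(𝕜, F) 1 w)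
    (hjinj : Injective j) (hinj : ∀ a, Injective (mfderiv 𝓘(𝕜, E) 𝓘(𝕜, F) j a))
    (hnr : ∀ a, w a ∉ range (mfderiv 𝓘(𝕜, E) 𝓘(𝕜, F) j a)) :
    ∃ U ∈ 𝓝 (0 : 𝕜), InjOn (fun z : 𝕜 × M => j z.2 + z.1 • w z.2) (U ×ˢ univ) ∧
      ∀ t ∈ U, ∀ p, Injective (mfderiv 𝓘(𝕜, E) 𝓘(𝕜, F) (fun q => j q + t • w q) p) := by
  obtain ⟨U, hU, hinjU⟩ := exists_mem_nhds_injOn_prod_univ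
    ((hj.continuous.comp continuous_snd).add
      (continuous_fst.smul (hw.continuous.comp continuous_snd)))
    (by simpa using hjinj) fun a => exists_mem_nhds_injOn_add_smul hj hw (hinj a) (hnr a)
  have hder : ∀ᶠ t in 𝓝 (0 : 𝕜), ∀ p,
      Injective (mfderiv 𝓘(𝕜, E) 𝓘(𝕜, F) (fun q => j q + t • w q) p) := by
    simpa using isCompact_univ.eventually_forall_of_forall_eventually fun a _ =>
      eventually_injective_mfderiv_add_smul hj hw (hinj a)
  exact ⟨_, inter_mem hU hder, hinjU.mono (prod_mono inter_subset_left subset_rfl),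
    fun _ ht => ht.2⟩

end Pushoff

theorem ContMDiff.contMDiff_mfderiv_apply {𝕜 E H M F : Type*} [NontriviallyNormedField 𝕜]
    [NormedAddCommGroup E] [NormedSpace 𝕜 E] [TopologicalSpace H] {I : ModelWithCorners 𝕜 E H}
    [TopologicalSpace M] [ChartedSpace H M] [IsManifold I 1 M] [NormedAddCommGroup F]
    [NormedSpace 𝕜 F] {f : M → F} {V : ∀ a : M, TangentSpace I a} {m n : WithTop ℕ∞}
    (hf : ContMDiff I 𝓘(𝕜, F) n f) (hmn : m + 1 ≤ n)
    (hV : ContMDiff I I.tangent m fun a => (⟨a, V a⟩ : TangentBundle I M)) :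
    ContMDiff I 𝓘(𝕜, F) m fun a => (mfderiv I 𝓘(𝕜, F) f a (V a) : F) :=
  (contMDiff_snd_tangentBundle_modelSpace F 𝓘(𝕜, F)).comp ((hf.contMDiff_tangentMap hmn).comp hV)

theorem IsTotallyRealOf.I_smul_notMem_range {n : ℕ} {N : Type*} [TopologicalSpace N]
    [ChartedSpace (EuclideanSpace ℝ (Fin n)) N] {j : N → Cn n} (htr : IsTotallyRealOf n j) {a : N}
    {v : TangentSpace (𝓡 n) a} (hv : mfderiv (𝓡 n) 𝓘(ℝ, Cn n) j a v ≠ 0) :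
    Complex.I • (mfderiv (𝓡 n) 𝓘(ℝ, Cn n) j a v : Cn n) ∉ range (mfderiv (𝓡 n) 𝓘(ℝ, Cn n) j a) :=
  fun h => by
    have hmem : Complex.I • (mfderiv (𝓡 n) 𝓘(ℝ, Cn n) j a v : Cn n) ∈
        range (mfderiv (𝓡 n) 𝓘(ℝ, Cn n) j a) ∩
          (fun v : Cn n => Complex.I • v) '' range (mfderiv (𝓡 n) 𝓘(ℝ, Cn n) j a) :=
      ⟨h, _, ⟨v, rfl⟩, rfl⟩
    rw [htr a] at hmem
    exact hv ((smul_eq_zero (M := Cn n).1 hmem).resolve_left Complex.I_ne_zero)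

/-- If `N` is a compact smooth `n`-manifold, `j : N → ℂⁿ` a totally real smooth
embedding and `ζ` a smooth nowhere-vanishing vector field on `N`, then for all sufficiently
small `ε > 0` the `ℂ`-normal pushoff `a ↦ j(a) + ε·i·djₐ(ζ(a))` is a smooth embedding whose
image is disjoint from `j(N)`. -/
theorem cPushoff_isSmoothEmbedding (n : ℕ) {N : Type*} [TopologicalSpace N]
    [ChartedSpace (EuclideanSpace ℝ (Fin n)) N] [IsManifold (𝓡 n) (⊤ : ℕ∞) N]
    [CompactSpace N]
    (j : N → Cn n) (hj : IsSmoothEmbeddingOf n j) (htr : IsTotallyRealOf n j)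
    (ζ : ∀ a : N, TangentSpace (𝓡 n) a)
    (hζsmooth : ContMDiff (𝓡 n) (𝓡 n).tangent (⊤ : ℕ∞)
      fun a => (⟨a, ζ a⟩ : TangentBundle (𝓡 n) N))
    (hζne : ∀ a : N, ζ a ≠ 0) :
    ∃ ε₀ > (0 : ℝ), ∀ ε : ℝ, 0 < ε → ε < ε₀ →
      IsSmoothEmbeddingOf n (cPushoff n j ζ ε) ∧
      Disjoint (Set.range (cPushoff n j ζ ε)) (Set.range j) := by
  obtain ⟨hjs, hjinj, -, hjd⟩ := hj
  set w : N → Cn n := fun a => Complex.I • (mfderiv (𝓡 n) 𝓘(ℝ, Cn n) j a (ζ a) : Cn n)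
  have hw : ContMDiff (𝓡 n) 𝓘(ℝ, Cn n) (⊤ : ℕ∞) w :=
    ((Complex.I • ContinuousLinearMap.id ℂ (Cn n)).restrictScalars ℝ).contMDiff.comp
      (hjs.contMDiff_mfderiv_apply (by simp) hζsmooth)
  have hle : (1 : WithTop ℕ∞) ≤ (⊤ : ℕ∞) := by exact_mod_cast le_top
  obtain ⟨U, hU, hinjU, hder⟩ := exists_mem_nhds_injOn_add_smul_prod_univ (hjs.of_le hle)
    (hw.of_le hle) hjinj hjd fun a =>
      htr.I_smul_notMem_range fun h => hζne a (hjd a (h.trans (map_zero _).symm))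
  obtain ⟨ε₀, hε₀, hball⟩ := Metric.mem_nhds_iff.1 hU
  refine ⟨ε₀, hε₀, fun ε hε hεε₀ => ?_⟩
  have hεU : ε ∈ U := hball (by rwa [mem_ball, Real.dist_eq, sub_zero, abs_of_pos hε])
  have hsmooth : ContMDiff (𝓡 n) 𝓘(ℝ, Cn n) (⊤ : ℕ∞) (cPushoff n j ζ ε) :=
    hjs.add (ContMDiff.smul (I := 𝓘(ℝ, ℝ)) (contMDiff_const (c := ε)) hw)
  have hinj : Injective (cPushoff n j ζ ε) := fun p q h =>
    congrArg Prod.snd (@hinjU (ε, p) ⟨hεU, trivial⟩ (ε, q) ⟨hεU, trivial⟩ h)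
  refine ⟨⟨hsmooth, hinj, (hsmooth.continuous.isClosedEmbedding hinj).isEmbedding,
    hder ε hεU⟩, ?_⟩
  rw [Set.disjoint_left]
  rintro _ ⟨p, rfl⟩ ⟨q, hq⟩
  have := @hinjU (ε, p) ⟨hεU, trivial⟩ (0, q) ⟨mem_of_mem_nhds hU, trivial⟩
    (show _ = j q + (0 : ℝ) • w q by rw [zero_smul, add_zero]; exact hq.symm)
  exact hε.ne' (congrArg Prod.fst this)
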